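/- arXiv:2510.00840 — 3 statements merged into one kernel-verified Lean document; each statement's English description precedes it below -/
import Mathlib

section
/- Correctness of the ancilla-free adder structure: the composition of the seven slices of Algorithm 2 — (1) b_i ↦ b_i ⊕ a_i for 1 ≤ i ≤ n−1; (2) apply the CNOT ladder L1 to (a_1,...,a_{n−1},z); (3) apply the inverse Toffoli ladder L2⁻¹ to ((a_0,...,a_{n−1},z), (b_0,...,b_{n−1})); (4) b_i ↦ b_i ⊕ a_i for 1 ≤ i ≤ n−1 and b_i ↦ b_i ⊕ 1 for 1 ≤ i ≤ n−2; (5) apply L2 to ((a_0,...,a_{n−1}), (b_0,...,b_{n−2})); (6) apply L1⁻¹ to (a_1,...,a_{n−1}); (7) b_i ↦ b_i ⊕ a_i for 0 ≤ i ≤ n−1 and b_i ↦ b_i ⊕ 1 for 1 ≤ i ≤ n−2 — maps (a, b, z) to (a, (a + b) mod 2^n, z ⊕ carry), where carry is the n-th bit of a + b. -/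
/-!
Let `c` be the ripple carries of `a + b`. Once slices 1 and 2 have replaced `b_i` by
`b_i ⊕ a_i` and `a_{i+1}` by `a_{i+1} ⊕ a_i`, each Toffoli gate of the inverse ladder in slice 3
evaluates the majority of `a_i`, `b_i`, `c_i`, so the `a`-register becomes `a_i ⊕ c_i` (and `z`
becomes `z ⊕ c_n`). Slice 4 turns `b_i` into `¬(b_i ⊕ c_i)`, with which the Toffoli ladder of
slice 5 computes the majority again and so strips the carries off, leaving the CNOT-ladder image
of `a`; the prefix XOR of slice 6 inverts that ladder. Slice 7 leaves `b_i ⊕ a_i ⊕ c_i`, which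
is the `i`-th bit of `a + b`.
-/

/-- The inverse-Toffoli-ladder recursion (`L2⁻¹`): `x''_0 = x_0` and
`x''_{i+1} = x_{i+1} ⊕ x''_i·y_i`. -/
def carryProp (x y : ℕ → ZMod 2) : ℕ → ZMod 2
  | 0 => x 0
  | i + 1 => x (i + 1) + carryProp x y i * y i

open Finset

def addCarry (a b : ℕ → ZMod 2) : ℕ → ZMod 2
  | 0 => 0
  | i + 1 => a i * b i + addCarry a b i * (a i + b i)

section Carry

variable {a b : ℕ → ZMod 2}

theorem addCarry_congr {a' : ℕ → ZMod 2} {i : ℕ} (h : ∀ j < i, a' j = a j) :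
    addCarry a' b i = addCarry a b i := by
  induction i with
  | zero => rfl
  | succ i ih => simp only [addCarry, h i i.lt_succ_self, ih fun j hj => h j (by omega)]

/- The carry is the majority of `a i`, `b i` and the previous carry; these are the two ways in
which the Toffoli gates of slices 3 and 5 compute it. -/
theorem addCarry_succ_eq_add_mul_add (i : ℕ) :
    addCarry a b (i + 1) = a i + (a i + addCarry a b i) * (b i + a i) := by
  rw [addCarry]
  generalize a i = x, b i = y, addCarry a b i = w
  revert x y w
  decide

theorem addCarry_succ_eq_add_mul_add_add_one (i : ℕ) :
    addCarry a b (i + 1) = a i + (a i + addCarry a b i) * (b i + addCarry a b i + 1) := by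
  rw [addCarry]
  generalize a i = x, b i = y, addCarry a b i = w
  revert x y w
  decide

end Carry

section Binary

theorem sum_bits_lt (s : ℕ → ZMod 2) (n : ℕ) : ∑ j ∈ range n, (s j).val * 2 ^ j < 2 ^ n := by
  induction n with
  | zero => simp
  | succ n ih =>
    have : (s n).val ≤ 1 := Nat.le_of_lt_succ (s n).val_lt
    rw [sum_range_succ, pow_succ]
    linarith [Nat.mul_le_mul_right (2 ^ n) this]

theorem sum_bits_div_two_pow_mod_two (s : ℕ → ZMod 2) {n i : ℕ} (h : i < n) :
    (∑ j ∈ range n, (s j).val * 2 ^ j) / 2 ^ i % 2 = (s i).val := by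
  induction n with
  | zero => omega
  | succ n ih =>
    rw [sum_range_succ]
    rcases Nat.lt_succ_iff_lt_or_eq.mp h with h | rfl
    · obtain ⟨k, rfl⟩ := Nat.exists_eq_add_of_lt h
      rw [show (s (i + k + 1)).val * 2 ^ (i + k + 1) = 2 * ((s (i + k + 1)).val * 2 ^ k) * 2 ^ i by
          ring,
        Nat.add_mul_div_right _ _ (Nat.two_pow_pos i), Nat.add_mul_mod_self_left, ih h]
    · rw [Nat.add_mul_div_right _ _ (Nat.two_pow_pos _), Nat.div_eq_of_lt (sum_bits_lt s i),
        zero_add, Nat.mod_eq_of_lt (s i).val_lt]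

variable (a b : ℕ → ZMod 2) (n : ℕ)

theorem sum_bits_add_sum_bits :
    ∑ j ∈ range n, (a j).val * 2 ^ j + ∑ j ∈ range n, (b j).val * 2 ^ j
      = ∑ j ∈ range n, (a j + b j + addCarry a b j).val * 2 ^ j
        + (addCarry a b n).val * 2 ^ n := by
  induction n with
  | zero => simp [addCarry]
  | succ n ih =>
    have full_adder : ∀ x y w : ZMod 2,
        x.val + y.val + w.val = (x + y + w).val + 2 * (x * y + w * (x + y)).val := by decide
    simp only [sum_range_succ, addCarry]
    linear_combination ih + 2 ^ n * full_adder (a n) (b n) (addCarry a b n)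

theorem sum_bits_add_sum_bits_mod :
    (∑ j ∈ range n, (a j).val * 2 ^ j + ∑ j ∈ range n, (b j).val * 2 ^ j) % 2 ^ n
      = ∑ j ∈ range n, (a j + b j + addCarry a b j).val * 2 ^ j := by
  rw [sum_bits_add_sum_bits, Nat.add_mul_mod_self_right, Nat.mod_eq_of_lt (sum_bits_lt _ n)]

theorem ite_testBit_sum_bits_add_sum_bits :
    (if (∑ j ∈ range n, (a j).val * 2 ^ j + ∑ j ∈ range n, (b j).val * 2 ^ j).testBit n
      then (1 : ZMod 2) else 0) = addCarry a b n := by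
  have hdiv : (∑ j ∈ range n, (a j).val * 2 ^ j + ∑ j ∈ range n, (b j).val * 2 ^ j) / 2 ^ n
      = (addCarry a b n).val := by
    rw [sum_bits_add_sum_bits, Nat.add_mul_div_right _ _ (Nat.two_pow_pos _),
      Nat.div_eq_of_lt (sum_bits_lt _ n), zero_add]
  rw [Nat.testBit_eq_decide_div_mod_eq, hdiv]
  generalize addCarry a b n = c
  revert c
  decide

end Binary

theorem carryProp_eq_add_addCarry {x y u b : ℕ → ZMod 2} {m : ℕ} (hx0 : x 0 = u 0)
    (hx1 : x 1 = u 1) (hx : ∀ i, 1 ≤ i → i < m → x (i + 1) = u (i + 1) + u i)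
    (hy0 : y 0 = b 0) (hy : ∀ i, 1 ≤ i → i < m → y i = b i + u i) :
    ∀ i ≤ m, carryProp x y i = u i + addCarry u b i := by
  intro i hi
  induction i with
  | zero => simp [carryProp, addCarry, hx0]
  | succ i ih =>
    rcases Nat.eq_zero_or_pos i with rfl | hpos
    · simp [carryProp, addCarry, hx0, hx1, hy0]
    · rw [carryProp, ih (by omega), hx i hpos (by omega), hy i hpos (by omega),
        addCarry_succ_eq_add_mul_add]
      ring

theorem sum_Icc_one_eq_of_ladder {f a : ℕ → ZMod 2} {m : ℕ} (h1 : f 1 = a 1)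
    (h : ∀ j, 1 ≤ j → j < m → f (j + 1) = a (j + 1) + a j) :
    ∀ i, 1 ≤ i → i ≤ m → ∑ j ∈ Icc 1 i, f j = a i := by
  intro i hi
  induction i, hi using Nat.le_induction with
  | base => simp [h1]
  | succ i hi ih =>
    intro him
    rw [sum_Icc_succ_top (by omega), ih (by omega), h i hi (by omega), add_left_comm,
      CharTwo.add_self_eq_zero, add_zero]

namespace Adder

variable (n : ℕ) (a b : ℕ → ZMod 2) (z : ZMod 2)

/- The register contents after the slices: `xRegk` and `bRegk` are `Xk` and `Bk` of the
statement. -/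

def xReg0 : ℕ → ZMod 2 := fun i => if i = n then z else a i

def bReg1 : ℕ → ZMod 2 := fun i => if 1 ≤ i ∧ i ≤ n - 1 then b i + a i else b i

def xReg1 : ℕ → ZMod 2 := fun i =>
  if 2 ≤ i ∧ i ≤ n then xReg0 n a z i + xReg0 n a z (i - 1) else xReg0 n a z i

def xReg2 : ℕ → ZMod 2 := carryProp (xReg1 n a z) (bReg1 n a b)

def bReg2 : ℕ → ZMod 2 := fun i =>
  if 1 ≤ i ∧ i ≤ n - 1 then bReg1 n a b i + xReg2 n a b z i else bReg1 n a b i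

def bReg3 : ℕ → ZMod 2 := fun i =>
  if 1 ≤ i ∧ i ≤ n - 2 then bReg2 n a b z i + 1 else bReg2 n a b z i

def xReg3 : ℕ → ZMod 2 := fun i =>
  if 1 ≤ i ∧ i ≤ n - 1 then xReg2 n a b z i + xReg2 n a b z (i - 1) * bReg3 n a b z (i - 1)
  else xReg2 n a b z i

def xReg4 : ℕ → ZMod 2 := fun i =>
  if 1 ≤ i ∧ i ≤ n - 1 then ∑ j ∈ Icc 1 i, xReg3 n a b z j else xReg3 n a b z i

def bReg4 : ℕ → ZMod 2 := fun i =>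
  if i ≤ n - 1 then bReg3 n a b z i + xReg4 n a b z i else bReg3 n a b z i

def bReg5 : ℕ → ZMod 2 := fun i =>
  if 1 ≤ i ∧ i ≤ n - 2 then bReg4 n a b z i + 1 else bReg4 n a b z i

variable {n a b z} {i : ℕ}

theorem xReg2_eq (hi : i ≤ n) : xReg2 n a b z i = xReg0 n a z i + addCarry a b i := by
  rw [xReg2, ← addCarry_congr (a' := xReg0 n a z) fun j hj => if_neg (by omega)]
  refine carryProp_eq_add_addCarry (m := n) ?_ ?_ (fun j hj hjn => ?_) ?_ (fun j hj hjn => ?_) i hi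
  all_goals simp only [xReg1, bReg1, xReg0]
  all_goals split_ifs <;> first | rfl | omega

theorem xReg2_of_lt (hi : i < n) : xReg2 n a b z i = a i + addCarry a b i := by
  rw [xReg2_eq hi.le, xReg0, if_neg hi.ne]

theorem xReg2_self : xReg2 n a b z n = z + addCarry a b n := by
  rw [xReg2_eq le_rfl, xReg0, if_pos rfl]

theorem bReg3_zero : bReg3 n a b z 0 = b 0 := by
  simp [bReg3, bReg2, bReg1]

theorem bReg3_of_le (hi1 : 1 ≤ i) (hi : i ≤ n - 2) :
    bReg3 n a b z i = b i + addCarry a b i + 1 := by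
  simp only [bReg3, bReg2, bReg1]
  rw [if_pos ⟨hi1, hi⟩, if_pos ⟨hi1, by omega⟩, if_pos ⟨hi1, by omega⟩, xReg2_of_lt (by omega)]
  grind

theorem bReg3_of_eq (hi1 : 1 ≤ i) (hi : i = n - 1) : bReg3 n a b z i = b i + addCarry a b i := by
  simp only [bReg3, bReg2, bReg1]
  rw [if_neg (by omega), if_pos ⟨hi1, hi.le⟩, if_pos ⟨hi1, hi.le⟩, xReg2_of_lt (by omega)]
  grind

theorem xReg3_zero (hn : 1 ≤ n) : xReg3 n a b z 0 = a 0 := by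
  rw [xReg3, if_neg (by omega), xReg2_of_lt hn]
  simp [addCarry]

theorem xReg3_one (hn : 1 < n) : xReg3 n a b z 1 = a 1 := by
  rw [xReg3, if_pos ⟨le_rfl, by omega⟩, Nat.sub_self, xReg2_of_lt hn, xReg2_of_lt (by omega),
    bReg3_zero]
  simp only [addCarry]
  grind

theorem xReg3_succ (hi1 : 1 ≤ i) (hi : i + 1 < n) : xReg3 n a b z (i + 1) = a (i + 1) + a i := by
  rw [xReg3, if_pos ⟨by omega, by omega⟩, Nat.add_sub_cancel, xReg2_of_lt hi,
    xReg2_of_lt (by omega), bReg3_of_le hi1 (by omega), addCarry_succ_eq_add_mul_add_add_one]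
  grind

theorem xReg4_of_lt (hi : i < n) : xReg4 n a b z i = a i := by
  rcases Nat.eq_zero_or_pos i with rfl | hi1
  · rw [xReg4, if_neg (by omega), xReg3_zero hi]
  · rw [xReg4, if_pos ⟨hi1, by omega⟩]
    exact sum_Icc_one_eq_of_ladder (m := n - 1) (xReg3_one (by omega))
      (fun j hj hjn => xReg3_succ hj (by omega)) i hi1 (by omega)

theorem xReg4_self : xReg4 n a b z n = z + addCarry a b n := by
  rw [xReg4, if_neg (by omega), xReg3, if_neg (by omega), xReg2_self]

theorem bReg5_of_lt (hi : i < n) : bReg5 n a b z i = a i + b i + addCarry a b i := by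
  simp only [bReg5, bReg4, if_pos (show i ≤ n - 1 by omega), xReg4_of_lt hi]
  rcases Nat.eq_zero_or_pos i with rfl | hi1
  · rw [if_neg (by omega), bReg3_zero, addCarry, add_zero, add_comm]
  by_cases hin : i ≤ n - 2
  · rw [if_pos ⟨hi1, hin⟩, bReg3_of_le hi1 hin]
    grind
  · rw [if_neg (by omega), bReg3_of_eq hi1 (by omega)]
    ring

end Adder

theorem adder_no_ancilla_correct_general (n : ℕ) (a b : ℕ → ZMod 2) (z : ZMod 2) :
    -- register (a_0, ..., a_{n-1}, z)
    let X0 : ℕ → ZMod 2 := fun i => if i = n then z else a i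
    -- Slice 1: b_i ↦ b_i ⊕ a_i for 1 ≤ i ≤ n-1
    let B1 : ℕ → ZMod 2 := fun i => if 1 ≤ i ∧ i ≤ n - 1 then b i + a i else b i
    -- Slice 2: CNOT ladder L1 on (a_1, ..., a_{n-1}, z)
    let X1 : ℕ → ZMod 2 := fun i => if 2 ≤ i ∧ i ≤ n then X0 i + X0 (i - 1) else X0 i
    -- Slice 3: inverse Toffoli ladder L2⁻¹ on ((a_0, ..., a_{n-1}, z), (b_0, ..., b_{n-1}))
    let X2 : ℕ → ZMod 2 := carryProp X1 B1
    -- Slice 4: b_i ↦ b_i ⊕ a_i for 1 ≤ i ≤ n-1, then b_i ↦ b_i ⊕ 1 for 1 ≤ i ≤ n-2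
    let B2 : ℕ → ZMod 2 := fun i => if 1 ≤ i ∧ i ≤ n - 1 then B1 i + X2 i else B1 i
    let B3 : ℕ → ZMod 2 := fun i => if 1 ≤ i ∧ i ≤ n - 2 then B2 i + 1 else B2 i
    -- Slice 5: Toffoli ladder L2 on ((a_0, ..., a_{n-1}), (b_0, ..., b_{n-2}))
    let X3 : ℕ → ZMod 2 := fun i =>
      if 1 ≤ i ∧ i ≤ n - 1 then X2 i + X2 (i - 1) * B3 (i - 1) else X2 i
    -- Slice 6: inverse CNOT ladder L1⁻¹ (prefix XOR) on (a_1, ..., a_{n-1})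
    let X4 : ℕ → ZMod 2 := fun i =>
      if 1 ≤ i ∧ i ≤ n - 1 then ∑ j ∈ Finset.Icc 1 i, X3 j else X3 i
    -- Slice 7: b_i ↦ b_i ⊕ a_i for 0 ≤ i ≤ n-1, then b_i ↦ b_i ⊕ 1 for 1 ≤ i ≤ n-2
    let B4 : ℕ → ZMod 2 := fun i => if i ≤ n - 1 then B3 i + X4 i else B3 i
    let B5 : ℕ → ZMod 2 := fun i => if 1 ≤ i ∧ i ≤ n - 2 then B4 i + 1 else B4 i
    -- the represented integers
    let va : ℕ := ∑ i ∈ Finset.range n, (a i).val * 2 ^ i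
    let vb : ℕ := ∑ i ∈ Finset.range n, (b i).val * 2 ^ i
    -- final state: a unchanged, b holds (a+b) mod 2^n, z is XORed with the carry
    (∀ i < n, X4 i = a i) ∧
    (X4 n = z + if (va + vb).testBit n then 1 else 0) ∧
    (∀ i < n, (B5 i).val = (va + vb) % 2 ^ n / 2 ^ i % 2) := by
  intro X0 B1 X1 X2 B2 B3 X3 X4 B4 B5 va vb
  refine ⟨fun i hi => Adder.xReg4_of_lt hi, ?_, fun i hi => ?_⟩
  · rw [ite_testBit_sum_bits_add_sum_bits]
    exact Adder.xReg4_self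
  · rw [sum_bits_add_sum_bits_mod, sum_bits_div_two_pow_mod_two _ hi]
    exact congrArg ZMod.val (Adder.bReg5_of_lt hi)

/-- Correctness of the ancilla-free adder structure (Algorithm 2): the composition of the
seven slices maps `(a, b, z)` to `(a, (a + b) mod 2^n, z ⊕ carry)`, where `carry` is the
`n`-th bit of `a + b`. The `a`-register together with `z` is modelled as the register
`X` of length `n+1` with `X_n = z`. -/
theorem adder_no_ancilla_correct (n : ℕ) (hn : 1 ≤ n) (a b : ℕ → ZMod 2) (z : ZMod 2) :
    -- register (a_0, ..., a_{n-1}, z)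
    let X0 : ℕ → ZMod 2 := fun i => if i = n then z else a i
    -- Slice 1: b_i ↦ b_i ⊕ a_i for 1 ≤ i ≤ n-1
    let B1 : ℕ → ZMod 2 := fun i => if 1 ≤ i ∧ i ≤ n - 1 then b i + a i else b i
    -- Slice 2: CNOT ladder L1 on (a_1, ..., a_{n-1}, z)
    let X1 : ℕ → ZMod 2 := fun i => if 2 ≤ i ∧ i ≤ n then X0 i + X0 (i - 1) else X0 i
    -- Slice 3: inverse Toffoli ladder L2⁻¹ on ((a_0, ..., a_{n-1}, z), (b_0, ..., b_{n-1}))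
    let X2 : ℕ → ZMod 2 := carryProp X1 B1
    -- Slice 4: b_i ↦ b_i ⊕ a_i for 1 ≤ i ≤ n-1, then b_i ↦ b_i ⊕ 1 for 1 ≤ i ≤ n-2
    let B2 : ℕ → ZMod 2 := fun i => if 1 ≤ i ∧ i ≤ n - 1 then B1 i + X2 i else B1 i
    let B3 : ℕ → ZMod 2 := fun i => if 1 ≤ i ∧ i ≤ n - 2 then B2 i + 1 else B2 i
    -- Slice 5: Toffoli ladder L2 on ((a_0, ..., a_{n-1}), (b_0, ..., b_{n-2}))
    let X3 : ℕ → ZMod 2 := fun i =>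
      if 1 ≤ i ∧ i ≤ n - 1 then X2 i + X2 (i - 1) * B3 (i - 1) else X2 i
    -- Slice 6: inverse CNOT ladder L1⁻¹ (prefix XOR) on (a_1, ..., a_{n-1})
    let X4 : ℕ → ZMod 2 := fun i =>
      if 1 ≤ i ∧ i ≤ n - 1 then ∑ j ∈ Finset.Icc 1 i, X3 j else X3 i
    -- Slice 7: b_i ↦ b_i ⊕ a_i for 0 ≤ i ≤ n-1, then b_i ↦ b_i ⊕ 1 for 1 ≤ i ≤ n-2
    let B4 : ℕ → ZMod 2 := fun i => if i ≤ n - 1 then B3 i + X4 i else B3 i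
    let B5 : ℕ → ZMod 2 := fun i => if 1 ≤ i ∧ i ≤ n - 2 then B4 i + 1 else B4 i
    -- the represented integers
    let va : ℕ := ∑ i ∈ Finset.range n, (a i).val * 2 ^ i
    let vb : ℕ := ∑ i ∈ Finset.range n, (b i).val * 2 ^ i
    -- final state: a unchanged, b holds (a+b) mod 2^n, z is XORed with the carry
    (∀ i < n, X4 i = a i) ∧
    (X4 n = z + if (va + vb).testBit n then 1 else 0) ∧
    (∀ i < n, (B5 i).val = (va + vb) % 2 ^ n / 2 ^ i % 2) :=
  adder_no_ancilla_correct_general n a b z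
end

section
/- Correctness of the ancilla-based adder structure: Algorithm 1 — (1) c_i ↦ c_i ⊕ a_i·b_i and b_i ↦ b_i ⊕ a_i for 0 ≤ i ≤ n−1; (2) apply L2⁻¹ to the registers (c_0,...,c_{n−1}) with controls (b_1,...,b_{n−1}); (3) b_{i+1} ↦ b_{i+1} ⊕ c_i, b_i ↦ b_i ⊕ a_i, b_i ↦ b_i ⊕ 1 for 0 ≤ i ≤ n−2; (4) apply L2 to (c_0,...,c_{n−2}) with reversed controls from b; (5) b_i ↦ b_i ⊕ a_i, then c_i ↦ c_i ⊕ a_i·b_i, then b_i ↦ b_i ⊕ 1 for 0 ≤ i ≤ n−2 — maps (a, b, 0^{n−1}, z) to (a, (a+b) mod 2^n, 0^{n−1}, z ⊕ carry), in particular all n−1 ancilla bits return to 0. -/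
namespace RippleCarry

def bitsVal (s : ℕ → ZMod 2) (n : ℕ) : ℕ := ∑ i ∈ Finset.range n, (s i).val * 2 ^ i

theorem bitsVal_succ (s : ℕ → ZMod 2) (n : ℕ) :
    bitsVal s (n + 1) = bitsVal s n + (s n).val * 2 ^ n :=
  Finset.sum_range_succ _ _

theorem bitsVal_lt (s : ℕ → ZMod 2) (n : ℕ) : bitsVal s n < 2 ^ n := by
  induction n with
  | zero => simp [bitsVal]
  | succ n ih =>
    have : (s n).val ≤ 1 := Nat.le_of_lt_succ (ZMod.val_lt (s n))
    rw [bitsVal_succ, pow_succ]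
    nlinarith

theorem bitsVal_mod_two_pow (s : ℕ → ZMod 2) {k n : ℕ} (hkn : k ≤ n) :
    bitsVal s n % 2 ^ k = bitsVal s k := by
  induction n, hkn using Nat.le_induction with
  | base => exact Nat.mod_eq_of_lt (bitsVal_lt s k)
  | succ n hkn ih =>
    obtain ⟨d, hd⟩ := pow_dvd_pow 2 hkn
    rw [bitsVal_succ, hd, mul_comm (2 ^ k), ← mul_assoc, Nat.add_mul_mod_self_right, ih]

theorem bitsVal_div_two_pow_mod_two (s : ℕ → ZMod 2) {i n : ℕ} (hin : i < n) :
    bitsVal s n / 2 ^ i % 2 = (s i).val := by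
  rw [← Nat.mod_mul_right_div_self, ← pow_succ, bitsVal_mod_two_pow s hin, bitsVal_succ,
    Nat.add_mul_div_right _ _ (by positivity), Nat.div_eq_of_lt (bitsVal_lt s i), zero_add]

def carry (a b : ℕ → ZMod 2) : ℕ → ZMod 2
  | 0 => 0
  | k + 1 => a k * b k + carry a b k * (a k + b k)

theorem carry_succ (a b : ℕ → ZMod 2) (k : ℕ) :
    carry a b (k + 1) = a k * b k + carry a b k * (a k + b k) :=
  rfl

theorem val_add_val_add_val (x y c : ZMod 2) :
    x.val + y.val + c.val = (x + y + c).val + 2 * (x * y + c * (x + y)).val := by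
  revert x y c; decide

theorem bitsVal_add_bitsVal (a b : ℕ → ZMod 2) (n : ℕ) :
    bitsVal a n + bitsVal b n =
      bitsVal (fun i => a i + b i + carry a b i) n + (carry a b n).val * 2 ^ n := by
  induction n with
  | zero => simp [bitsVal, carry]
  | succ n ih =>
    have hbit := congrArg (· * 2 ^ n) (val_add_val_add_val (a n) (b n) (carry a b n))
    simp only [bitsVal_succ, carry] at hbit ⊢
    rw [pow_succ]
    linarith

theorem bitsVal_add_bitsVal_mod (a b : ℕ → ZMod 2) (n : ℕ) :
    (bitsVal a n + bitsVal b n) % 2 ^ n = bitsVal (fun i => a i + b i + carry a b i) n := by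
  rw [bitsVal_add_bitsVal, Nat.add_mul_mod_self_right, Nat.mod_eq_of_lt (bitsVal_lt _ n)]

theorem bitsVal_add_bitsVal_div (a b : ℕ → ZMod 2) (n : ℕ) :
    (bitsVal a n + bitsVal b n) / 2 ^ n = (carry a b n).val := by
  rw [bitsVal_add_bitsVal, Nat.add_mul_div_right _ _ (by positivity),
    Nat.div_eq_of_lt (bitsVal_lt _ n), zero_add]

theorem ite_testBit_bitsVal_add_bitsVal (a b : ℕ → ZMod 2) (n : ℕ) :
    (if (bitsVal a n + bitsVal b n).testBit n then 1 else 0 : ZMod 2) = carry a b n := by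
  rw [Nat.testBit_eq_decide_div_mod_eq, bitsVal_add_bitsVal_div]
  generalize carry a b n = c
  revert c; decide

theorem carryProp_eq_carry_add {a b x y : ℕ → ZMod 2} {i : ℕ}
    (hx : ∀ j < i, x j = a j * b j) (hy : ∀ j < i, y j = a (j + 1) + b (j + 1)) :
    carryProp x y i = carry a b (i + 1) + (x i - a i * b i) := by
  induction i with
  | zero => simp [carryProp, carry]
  | succ i ih =>
    rw [carryProp, ih (fun j hj => hx j (by omega)) (fun j hj => hy j (by omega)),
      hx i (by omega), hy i (by omega), carry_succ a b (i + 1)]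
    ring

theorem carry_uncompute (x y c : ZMod 2) :
    x * y + c * (x + y) + c * (y + c + 1) + x * (y + c + 1 + x) = 0 := by
  revert x y c; decide

end RippleCarry

open RippleCarry

/-- Correctness of the ancilla-based adder structure (Algorithm 1): it maps
`(a, b, 0^{n-1}, z)` to `(a, (a+b) mod 2^n, 0^{n-1}, z ⊕ carry)`; in particular all
`n-1` ancilla bits return to `0`.  The ancilla register `C` has `n` bits, the first
`n-1` initialized to `0` and the last one holding `z`. -/
theorem adder_with_ancilla_correct (n : ℕ) (hn : 1 ≤ n) (a b : ℕ → ZMod 2) (z : ZMod 2) :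
    -- ancilla register: n-1 zeros and z in the last position
    let C0 : ℕ → ZMod 2 := fun i => if i = n - 1 then z else 0
    -- Slice 1: c_i ↦ c_i ⊕ a_i·b_i and b_i ↦ b_i ⊕ a_i for 0 ≤ i ≤ n-1
    let C1 : ℕ → ZMod 2 := fun i => if i + 1 ≤ n then C0 i + a i * b i else C0 i
    let B1 : ℕ → ZMod 2 := fun i => if i + 1 ≤ n then b i + a i else b i
    -- Slice 2: inverse Toffoli ladder L2⁻¹ on (c_0, ..., c_{n-1}) with controls (b_1, ..., b_{n-1})
    let C2 : ℕ → ZMod 2 := carryProp C1 (fun i => B1 (i + 1))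
    -- Slice 3: b_{i+1} ↦ b_{i+1} ⊕ c_i, b_i ↦ b_i ⊕ a_i, b_i ↦ b_i ⊕ 1 for 0 ≤ i ≤ n-2
    let B2 : ℕ → ZMod 2 := fun j =>
      B1 j + (if 1 ≤ j ∧ j + 1 ≤ n then C2 (j - 1) else 0) +
        (if j + 2 ≤ n then a j + 1 else 0)
    -- Slice 4: Toffoli ladder L2 on (c_0, ..., c_{n-2}) with controls (b_1, ..., b_{n-2})
    let C3 : ℕ → ZMod 2 := fun i =>
      if 1 ≤ i ∧ i + 2 ≤ n then C2 i + C2 (i - 1) * B2 i else C2 i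
    -- Slice 5: b_i ↦ b_i ⊕ a_i, then c_i ↦ c_i ⊕ a_i·b_i, then b_i ↦ b_i ⊕ 1, for 0 ≤ i ≤ n-2
    let B3 : ℕ → ZMod 2 := fun i => if i + 2 ≤ n then B2 i + a i else B2 i
    let C4 : ℕ → ZMod 2 := fun i => if i + 2 ≤ n then C3 i + a i * B3 i else C3 i
    let B4 : ℕ → ZMod 2 := fun i => if i + 2 ≤ n then B3 i + 1 else B3 i
    -- the represented integers
    let va : ℕ := ∑ i ∈ Finset.range n, (a i).val * 2 ^ i
    let vb : ℕ := ∑ i ∈ Finset.range n, (b i).val * 2 ^ i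
    -- final state: ancillas restored to 0, b holds (a+b) mod 2^n, z is XORed with the carry
    (∀ i, i + 1 < n → C4 i = 0) ∧
    (C4 (n - 1) = z + if (va + vb).testBit n then 1 else 0) ∧
    (∀ i < n, (B4 i).val = (va + vb) % 2 ^ n / 2 ^ i % 2) := by
  intro C0 C1 B1 C2 B2 C3 B3 C4 B4 va vb
  have hC2 : ∀ i < n, C2 i = carry a b (i + 1) + C0 i := fun i hi => by
    refine (carryProp_eq_carry_add (a := a) (b := b) (fun j hj => ?_) (fun j hj => ?_)).trans ?_
    · simp only [C1, C0]; rw [if_pos (by omega), if_neg (by omega), zero_add]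
    · simp only [B1]; rw [if_pos (by omega), add_comm]
    · simp [C1, hi]
  have hC2_low : ∀ i, i + 1 < n → C2 i = carry a b (i + 1) := fun i hi => by
    simp [hC2 i (by omega), C0, show i ≠ n - 1 by omega]
  have hB2 : ∀ j < n, B2 j = b j + carry a b j + if j + 2 ≤ n then 1 else a j := by
    rintro (_ | j) hj
    · simp only [B2, B1]
      rw [if_pos (by omega), if_neg (by omega)]
      split_ifs <;> grind [carry]
    · simp only [B2, B1]
      rw [if_pos (by omega), if_pos (by omega), Nat.add_sub_cancel, hC2_low j (by omega)]
      split_ifs <;> grind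
  have hB4 : ∀ j < n, B4 j = a j + b j + carry a b j := fun j hj => by
    simp only [B4, B3, hB2 j hj]
    split_ifs <;> grind
  have hsum : va + vb = bitsVal a n + bitsVal b n := rfl
  refine ⟨fun i hi => ?_, ?_, fun i hi => ?_⟩
  · have hC3 : C3 i = carry a b (i + 1) + carry a b i * B2 i := by
      rcases i with _ | i
      · simp [C3, hC2_low 0 hi, carry]
      · simp only [C3]; rw [if_pos (by omega), hC2_low _ hi, Nat.add_sub_cancel,
          hC2_low i (by omega)]
    simp only [C4, B3]
    rw [if_pos (by omega), if_pos (by omega), hC3, hB2 i (by omega), if_pos (by omega), carry_succ]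
    exact carry_uncompute _ _ _
  · have hC4 : C4 (n - 1) = carry a b n + z := by
      simp only [C4, C3]
      rw [if_neg (by omega), if_neg (by omega), hC2 _ (by omega), Nat.sub_add_cancel hn]
      simp [C0]
    rw [hC4, hsum, ite_testBit_bitsVal_add_bitsVal, add_comm]
  · rw [hB4 i hi, hsum, bitsVal_add_bitsVal_mod, bitsVal_div_two_pow_mod_two _ hi]
end

section
/- The Toffoli count of the logarithmic-depth ladder circuit satisfies the closed formula: the total number of Toffoli gates in Algorithm 1 (CARRY†), namely twice (⌊n/2⌋ − 1 + Σ_{i=2}^{⌊log n⌋−1} (⌊n/2^i⌋ − 1)) for slices 1 and 4, plus ⌊(n−1)/2⌋ + Σ_{i=2}^{⌊log(2n/3)⌋} ⌊(n − 2^{i−1})/2^i⌋ for slice 2, plus ⌊n/2⌋ + Σ_{i=2}^{⌊log n⌋} ⌊n/2^i⌋ for slice 3, equals 4n − 3·HW(n) − 3·⌊log₂ n⌋ − 1, where HW(n) is the Hamming weight (number of ones in the binary expansion) of n. -/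
open Finset

lemma split_bot (f : ℕ → ℕ) (b : ℕ) (hb : 1 ≤ b) :
    ∑ i ∈ Icc 1 b, f i = f 1 + ∑ i ∈ Icc 2 b, f i := by
  have h : Icc 1 b = insert 1 (Icc 2 b) := by
    ext x; simp only [mem_Icc, mem_insert]; omega
  rw [h, Finset.sum_insert (by simp)]

lemma shift_sum (f : ℕ → ℕ) (K : ℕ) (hK : 1 ≤ K) :
    ∑ i ∈ Icc 2 K, f i = ∑ j ∈ Icc 1 (K-1), f (j+1) := by
  have h : Icc 2 K = Finset.map (addRightEmbedding 1) (Icc 1 (K-1)) := by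
    rw [Finset.map_add_right_Icc]; congr 1; omega
  rw [h, Finset.sum_map]; rfl

-- h_eq : sum of n/2^i plus Hamming weight
lemma h_eq : ∀ n, 1 ≤ n → ∀ K, n < 2^(K+1) →
    (∑ i ∈ Icc 1 K, n / 2^i) + (Nat.digits 2 n).sum = n := by
  intro n
  induction n using Nat.strong_induction_on with
  | _ n ih =>
    intro hn K hK
    rcases eq_or_lt_of_le hn with h1 | h2
    · -- n = 1
      subst_eqs
      have : ∀ i ∈ Icc 1 K, (1:ℕ) / 2^i = 0 := by
        intro i hi; simp only [mem_Icc] at hi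
        have : (2:ℕ)^1 ≤ 2^i := Nat.pow_le_pow_right (by norm_num) hi.1
        exact Nat.div_eq_of_lt (by omega)
      rw [Finset.sum_congr rfl this]
      simp
    · -- n ≥ 2
      have hn2 : 2 ≤ n := h2
      have hK1 : 1 ≤ K := by
        by_contra h
        have : K = 0 := by omega
        subst this; simp at hK; omega
      set m := n / 2 with hm
      have hm1 : 1 ≤ m := by omega
      have hmlt : m < n := by omega
      have hstep : ∀ j ∈ Icc 1 (K-1), n / 2^(j+1) = m / 2^j := by
        intro j hj
        rw [pow_succ, mul_comm, ← Nat.div_div_eq_div_mul]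
      rw [split_bot _ K hK1, shift_sum _ K hK1, Finset.sum_congr rfl hstep]
      have hmK : m < 2^(K-1+1) := by
        have : 2^(K-1+1) * 2 = 2^(K+1) := by
          rw [← pow_succ]; congr 1; omega
        omega
      have := ih m hmlt hm1 (K-1) hmK
      have hdig : (Nat.digits 2 n).sum = n % 2 + (Nat.digits 2 m).sum := by
        rw [Nat.digits_def' (by norm_num : 1 < 2) (by omega : 0 < n)]
        simp [hm]
      rw [pow_one, hdig]
      omega

lemma g_eq : ∀ n, 1 ≤ n → ∀ K, n ≤ 2^K →
    (∑ i ∈ Icc 1 K, (n - 2^(i-1)) / 2^i) + Nat.log 2 n + 1 = n := by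
  intro n
  induction n using Nat.strong_induction_on with
  | _ n ih =>
    intro hn K hK
    rcases eq_or_lt_of_le hn with h1 | h2
    · subst_eqs
      have : ∀ i ∈ Icc 1 K, ((1:ℕ) - 2^(i-1)) / 2^i = 0 := by
        intro i hi; simp only [mem_Icc] at hi
        have : (1:ℕ) ≤ 2^(i-1) := Nat.one_le_two_pow
        have h0 : (1:ℕ) - 2^(i-1) = 0 := by omega
        rw [h0]; simp
      rw [Finset.sum_congr rfl this]
      simp
    · have hn2 : 2 ≤ n := h2
      have hK1 : 1 ≤ K := by
        by_contra h
        have : K = 0 := by omega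
        subst this; simp at hK; omega
      set m := n / 2 with hm
      have hm1 : 1 ≤ m := by omega
      have hmlt : m < n := by omega
      have hstep : ∀ j ∈ Icc 1 (K-1),
          (n - 2^(j+1-1)) / 2^(j+1) = (m - 2^(j-1)) / 2^j := by
        intro j hj
        simp only [mem_Icc] at hj
        have e1 : (n - 2^(j+1-1)) / 2^(j+1) = ((n - 2^j) / 2) / 2^j := by
          simp only [Nat.add_sub_cancel]
          rw [Nat.div_div_eq_div_mul, ← pow_succ']
        have e2 : (n - 2^j) / 2 = m - 2^(j-1) := by
          have : (2:ℕ)^j = 2 * 2^(j-1) := by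
            rw [← pow_succ']; congr 1; omega
          omega
        rw [e1, e2]
      rw [split_bot _ K hK1, shift_sum _ K hK1, Finset.sum_congr rfl hstep]
      have hmK : m ≤ 2^(K-1) := by
        have : 2^(K-1) * 2 = 2^K := by rw [← pow_succ]; congr 1; omega
        omega
      have hih := ih m hmlt hm1 (K-1) hmK
      have hlog : Nat.log 2 m = Nat.log 2 n - 1 := Nat.log_div_base 2 n
      have hlog1 : 1 ≤ Nat.log 2 n := Nat.log_pos (by norm_num) hn2
      omega

/-- The Toffoli count of the logarithmic-depth ladder circuit (CARRY†): the gate counts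
of the four slices sum to the closed form `4n − 3·HW(n) − 3·⌊log₂ n⌋ − 1`, where `HW(n)`
is the binary Hamming weight of `n`. -/
theorem carry_dagger_toffoli_count (n : ℕ) (hn : 1 ≤ n) :
    2 * ((n / 2 - 1) + ∑ i ∈ Finset.Icc 2 (Nat.log 2 n - 1), (n / 2 ^ i - 1)) +
      ((n - 1) / 2 + ∑ i ∈ Finset.Icc 2 (Nat.log 2 (2 * n / 3)), (n - 2 ^ (i - 1)) / 2 ^ i) +
      (n / 2 + ∑ i ∈ Finset.Icc 2 (Nat.log 2 n), n / 2 ^ i) =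
    4 * n - 3 * (Nat.digits 2 n).sum - 3 * Nat.log 2 n - 1 := by
  rcases lt_or_ge n 4 with h4 | h4
  · have e1 : Nat.log 2 1 = 0 := Nat.log_eq_of_pow_le_of_lt_pow (by norm_num) (by norm_num)
    have e2 : Nat.log 2 2 = 1 := Nat.log_eq_of_pow_le_of_lt_pow (by norm_num) (by norm_num)
    have e3 : Nat.log 2 3 = 1 := Nat.log_eq_of_pow_le_of_lt_pow (by norm_num) (by norm_num)
    have e0 : Nat.log 2 0 = 0 := Nat.log_zero_right 2
    interval_cases n <;> norm_num [e0, e1, e2, e3]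
  -- now n ≥ 4
  set L := Nat.log 2 n with hL
  set M := Nat.log 2 (2 * n / 3) with hM
  set HW := (Nat.digits 2 n).sum with hHW
  have hn0 : n ≠ 0 := by omega
  have hL2 : 2 ≤ L := by
    rw [hL, Nat.le_log_iff_pow_le (by norm_num) hn0]; omega
  have hpLn : 2 ^ L ≤ n := Nat.pow_log_le_self 2 hn0
  have hnpL : n < 2 ^ (L + 1) := Nat.lt_pow_succ_log_self (by norm_num) n
  -- slice 3
  have hC : n / 2 + (∑ i ∈ Icc 2 L, n / 2 ^ i) + HW = n := by
    have hs := split_bot (fun i => n / 2 ^ i) L (by omega)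
    simp only [pow_one] at hs
    rw [← hs]
    exact h_eq n (by omega) L hnpL
  -- slice 1
  have hA : (n / 2 - 1) + (∑ i ∈ Icc 2 (L - 1), (n / 2 ^ i - 1)) + (HW + L) = n := by
    have htop : (∑ i ∈ Icc 1 L, n / 2 ^ i) =
        (∑ i ∈ Icc 1 (L - 1), n / 2 ^ i) + n / 2 ^ L := by
      have hL' : L - 1 + 1 = L := by omega
      rw [← hL', Finset.sum_Icc_succ_top (by omega), hL']
    have hdivL : n / 2 ^ L = 1 := by
      have h1 : 1 ≤ n / 2 ^ L := Nat.one_le_div_iff (by positivity) |>.mpr hpLn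
      have h2 : n / 2 ^ L < 2 := (Nat.div_lt_iff_lt_mul (by positivity)).mpr
        (by rw [← pow_succ']; exact hnpL)
      omega
    have hfull := h_eq n (by omega) L hnpL
    rw [htop, hdivL] at hfull
    -- ∑ (n/2^i - 1) over Icc 1 (L-1)
    have hsub : (∑ i ∈ Icc 1 (L - 1), (n / 2 ^ i - 1)) + (L - 1) =
        ∑ i ∈ Icc 1 (L - 1), n / 2 ^ i := by
      have h1 : ∑ i ∈ Icc 1 (L-1), (n / 2 ^ i - 1 + 1) =
          (∑ i ∈ Icc 1 (L-1), (n / 2 ^ i - 1)) + ∑ _i ∈ Icc 1 (L-1), 1 :=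
        Finset.sum_add_distrib
      have h2 : ∑ _i ∈ Icc 1 (L-1), (1:ℕ) = L - 1 := by
        simp [Nat.card_Icc]
      have h3 : ∑ i ∈ Icc 1 (L-1), (n / 2 ^ i - 1 + 1) = ∑ i ∈ Icc 1 (L-1), n / 2 ^ i := by
        refine Finset.sum_congr rfl fun i hi => ?_
        simp only [mem_Icc] at hi
        have hle : 2 ^ i ≤ n := le_trans (Nat.pow_le_pow_right (by norm_num) (by omega)) hpLn
        have := Nat.one_le_div_iff (a := n) (b := 2^i) (by positivity) |>.mpr hle
        omega
      omega
    have hbot := split_bot (fun i => n / 2 ^ i - 1) (L - 1) (by omega)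
    simp only [pow_one] at hbot
    omega
  -- slice 2
  have hM1 : 1 ≤ M := by
    rw [hM, Nat.le_log_iff_pow_le (by norm_num) (by omega)]
    omega
  have hB : (n - 1) / 2 + (∑ i ∈ Icc 2 M, (n - 2 ^ (i - 1)) / 2 ^ i) + (L + 1) = n := by
    have hbot := split_bot (fun i => (n - 2 ^ (i - 1)) / 2 ^ i) M hM1
    simp only [pow_one, Nat.sub_self, pow_zero] at hbot
    have hext : (∑ i ∈ Icc 1 M, (n - 2 ^ (i - 1)) / 2 ^ i) =
        ∑ i ∈ Icc 1 n, (n - 2 ^ (i - 1)) / 2 ^ i := by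
      refine Finset.sum_subset (Finset.Icc_subset_Icc_right ?_) fun x hx hx' => ?_
      · calc M ≤ 2 * n / 3 := Nat.log_le_self 2 _
          _ ≤ n := by omega
      · simp only [mem_Icc] at hx hx'
        have hxM : M + 1 ≤ x := by omega
        have h1 : 2 * n / 3 < 2 ^ (M + 1) := Nat.lt_pow_succ_log_self (by norm_num) _
        have h2 : (2:ℕ) ^ (M + 1) ≤ 2 ^ x := Nat.pow_le_pow_right (by norm_num) hxM
        have h3 : 2 * n < 3 * 2 ^ x := by
          have := (Nat.div_lt_iff_lt_mul (by norm_num : (0:ℕ) < 3)).mp (lt_of_lt_of_le h1 h2)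
          omega
        have h4 : (2:ℕ) ^ x = 2 * 2 ^ (x - 1) := by
          rw [← pow_succ']; congr 1; omega
        exact Nat.div_eq_of_lt (by omega)
    rw [← hbot, hext]
    exact g_eq n (by omega) n (Nat.lt_two_pow_self (n := n)).le
  omega
end
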